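/- In a lexicographically sorted array of equal-length binary strings, for any three ordered strings K2 ≤ K1 ≤ K, the extended distance satisfies dist_e(K2,K) ≥ dist_e(K1,K), where dist_e(A,B) = KL(A,B) + KD_e(A,B)/2^B with KL the non-prefix length and KD_e the absolute difference of the decimal values of the length-B substrings immediately following the common prefix. -/

import Mathlib

/-- value of a binary string read as a binary numeral (most significant bit first) -/
def decimal (K : List Bool) : ℕ :=
  K.foldl (fun acc b => 2 * acc + cond b 1 0) 0

/-- length of the longest common prefix of two strings -/
def lcpLen : List Bool → List Bool → ℕ
  | a :: as, b :: bs => if a = b then lcpLen as bs + 1 else 0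
  | _, _ => 0

/-- non-prefix length `KL` of two hashkeys -/
def KL (K1 K2 : List Bool) : ℕ := K1.length - lcpLen K1 K2

/-- extended element distance `KD_e` -/
def KDe (B : ℕ) (K1 K2 : List Bool) : ℕ :=
  Nat.dist (decimal ((K1.drop (lcpLen K1 K2)).take B))
           (decimal ((K2.drop (lcpLen K1 K2)).take B))

/-- extended hashkey distance `dist_e = KL + KD_e / 2^B` -/
noncomputable def distE (B : ℕ) (K1 K2 : List Bool) : ℝ :=
  (KL K1 K2 : ℝ) + (KDe B K1 K2 : ℝ) / 2 ^ B

/-! If `K₂ ≤ K₁ ≤ K`, then `K₁` agrees with `K` wherever `K₂` does, so the common prefix with `K`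
can only grow from `K₂` to `K₁`. If it grows strictly, `KL` drops by at least one, which the
fractional part `KD_e / 2^B ∈ [0, 1)` cannot compensate. If it has the same length `l`, the three
strings agree on their first `l` bits, so the length-`B` windows after position `l` are still
sorted; windows of equal length compare like their binary values, and `KD_e(K₁, K)` is the
smaller of the two gaps. -/

namespace List

variable {α : Type*} [LinearOrder α]

theorem nil_le' (l : List α) : [] ≤ l := by
  cases l
  · exact le_rfl
  · exact le_of_lt (nil_lt_cons _ _)

theorem take_le_take_of_lt {l₁ l₂ : List α} (h : l₁ < l₂) (n : ℕ) : l₁.take n ≤ l₂.take n := by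
  induction h generalizing n with
  | nil => simpa using nil_le' _
  | @cons a _ _ _ ih =>
    cases n with
    | zero => exact le_rfl
    | succ n => exact cons_le_cons a (ih n)
  | rel hab =>
    cases n with
    | zero => exact le_rfl
    | succ n => exact le_of_lt (Lex.rel hab)

theorem take_le_take_of_le {l₁ l₂ : List α} (h : l₁ ≤ l₂) (n : ℕ) : l₁.take n ≤ l₂.take n := by
  obtain h | rfl := h.lt_or_eq
  · exact take_le_take_of_lt h n
  · exact le_rfl

theorem append_lt_append_left_iff (p : List α) {l₁ l₂ : List α} : p ++ l₁ < p ++ l₂ ↔ l₁ < l₂ := by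
  induction p with
  | nil => rfl
  | cons a p ih => exact lex_cons_iff.trans ih

theorem append_le_append_left_iff (p : List α) {l₁ l₂ : List α} : p ++ l₁ ≤ p ++ l₂ ↔ l₁ ≤ l₂ := by
  simp only [le_iff_lt_or_eq, append_lt_append_left_iff, append_cancel_left_eq]

theorem drop_le_drop_iff {l₁ l₂ : List α} {n : ℕ} (h : l₁.take n = l₂.take n) :
    l₁.drop n ≤ l₂.drop n ↔ l₁ ≤ l₂ := by
  conv_rhs => rw [← take_append_drop n l₁, ← take_append_drop n l₂, h]
  exact (append_le_append_left_iff _).symm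

theorem take_eq_of_le_of_le {l₁ l₂ l₃ : List α} (h₁₂ : l₁ ≤ l₂) (h₂₃ : l₂ ≤ l₃) {n : ℕ}
    (h : l₁.take n = l₃.take n) : l₂.take n = l₃.take n :=
  le_antisymm (take_le_take_of_le h₂₃ n) (h ▸ take_le_take_of_le h₁₂ n)

end List

theorem foldl_eq_mul_two_pow_add_decimal (K : List Bool) (a : ℕ) :
    K.foldl (fun acc b => 2 * acc + cond b 1 0) a = a * 2 ^ K.length + decimal K := by
  induction K generalizing a with
  | nil => simp [decimal]
  | cons b K ih =>
    rw [decimal, List.foldl_cons, List.foldl_cons, ih, ih, List.length_cons, pow_succ]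
    ring

theorem decimal_cons (b : Bool) (K : List Bool) :
    decimal (b :: K) = cond b 1 0 * 2 ^ K.length + decimal K := by
  rw [decimal, List.foldl_cons, foldl_eq_mul_two_pow_add_decimal]
  simp

theorem decimal_lt_two_pow (K : List Bool) : decimal K < 2 ^ K.length := by
  induction K with
  | nil => simp [decimal]
  | cons b K ih =>
    rw [decimal_cons, List.length_cons, pow_succ]
    cases b <;> simp only [cond_false, cond_true] <;> omega

theorem decimal_lt_decimal {K₁ K₂ : List Bool} (h : K₁ < K₂) (hlen : K₁.length = K₂.length) :
    decimal K₁ < decimal K₂ := by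
  induction h with
  | nil => simp at hlen
  | @cons b K₁ K₂ _ ih =>
    simp only [List.length_cons, Nat.succ_inj] at hlen
    simpa only [decimal_cons, hlen, Nat.add_lt_add_iff_left] using ih hlen
  | @rel b K₁ c K₂ hbc =>
    obtain ⟨rfl, rfl⟩ : b = false ∧ c = true := by revert hbc; cases b <;> cases c <;> decide
    simp only [List.length_cons, Nat.succ_inj] at hlen
    have := decimal_lt_two_pow K₁
    simp only [decimal_cons, hlen, cond_false, cond_true] at this ⊢
    omega

theorem decimal_le_decimal {K₁ K₂ : List Bool} (h : K₁ ≤ K₂) (hlen : K₁.length = K₂.length) :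
    decimal K₁ ≤ decimal K₂ := by
  obtain h | rfl := h.lt_or_eq
  exacts [(decimal_lt_decimal h hlen).le, le_rfl]

theorem le_lcpLen_iff {K₁ K₂ : List Bool} {n : ℕ} :
    n ≤ lcpLen K₁ K₂ ↔ n ≤ K₁.length ∧ K₁.take n = K₂.take n := by
  induction K₁ generalizing K₂ n with
  | nil => cases K₂ <;> cases n <;> simp [lcpLen]
  | cons a K₁ ih =>
    cases K₂ with
    | nil => cases n <;> simp [lcpLen]
    | cons b K₂ =>
      cases n with
      | zero => simp
      | succ n =>
        by_cases hab : a = b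
        · simp [lcpLen, hab, ih]
        · simp [lcpLen, hab]

theorem lcpLen_le_length (K₁ K₂ : List Bool) : lcpLen K₁ K₂ ≤ K₁.length :=
  (le_lcpLen_iff.mp le_rfl).1

theorem take_lcpLen (K₁ K₂ : List Bool) : K₁.take (lcpLen K₁ K₂) = K₂.take (lcpLen K₁ K₂) :=
  (le_lcpLen_iff.mp le_rfl).2

theorem lcpLen_le_lcpLen_of_le_of_le {K₁ K₂ K : List Bool} (h₁₂ : K₁ ≤ K₂) (h₂ : K₂ ≤ K) :
    lcpLen K₁ K ≤ lcpLen K₂ K := by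
  have htake := List.take_eq_of_le_of_le h₁₂ h₂ (take_lcpLen K₁ K)
  refine le_lcpLen_iff.mpr ⟨?_, htake⟩
  have := congrArg List.length (htake.trans (take_lcpLen K₁ K).symm)
  simp only [List.length_take] at this
  have := lcpLen_le_length K₁ K
  omega

theorem decimal_take_drop_le_of_le {K₁ K₂ : List Bool} (h : K₁ ≤ K₂) {n : ℕ}
    (htake : K₁.take n = K₂.take n) (hlen : K₁.length = K₂.length) (B : ℕ) :
    decimal ((K₁.drop n).take B) ≤ decimal ((K₂.drop n).take B) :=
  decimal_le_decimal (List.take_le_take_of_le ((List.drop_le_drop_iff htake).mpr h) B)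
    (by simp [hlen])

theorem KDe_lt_two_pow (B : ℕ) (K₁ K₂ : List Bool) : KDe B K₁ K₂ < 2 ^ B := by
  have window_lt (K : List Bool) : decimal ((K.drop (lcpLen K₁ K₂)).take B) < 2 ^ B :=
    (decimal_lt_two_pow _).trans_le (Nat.pow_le_pow_right two_pos (List.length_take_le _ _))
  have := window_lt K₁
  have := window_lt K₂
  rw [KDe, Nat.dist]
  omega

theorem KL_le_distE (B : ℕ) (K₁ K₂ : List Bool) : (KL K₁ K₂ : ℝ) ≤ distE B K₁ K₂ :=
  le_add_of_nonneg_right (by positivity)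

theorem distE_lt_KL_add_one (B : ℕ) (K₁ K₂ : List Bool) : distE B K₁ K₂ < KL K₁ K₂ + 1 := by
  have : (KDe B K₁ K₂ : ℝ) < 2 ^ B := by exact_mod_cast KDe_lt_two_pow B K₁ K₂
  rw [distE, add_lt_add_iff_left, div_lt_one (by positivity)]
  exact this

theorem distE_lt_distE_of_KL_lt {B : ℕ} {K₁ K₂ K₁' K₂' : List Bool}
    (h : KL K₁ K₂ < KL K₁' K₂') : distE B K₁ K₂ < distE B K₁' K₂' := by
  have h' : (KL K₁ K₂ : ℝ) + 1 ≤ KL K₁' K₂' := by exact_mod_cast h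
  linarith [distE_lt_KL_add_one B K₁ K₂, KL_le_distE B K₁' K₂']

theorem KDe_le_KDe_of_le_of_le {K₂ K₁ K : List Bool} (h₂₁ : K₂ ≤ K₁) (h₁ : K₁ ≤ K)
    (hlen₂₁ : K₂.length = K₁.length) (hlen₁ : K₁.length = K.length)
    (hlcp : lcpLen K₂ K = lcpLen K₁ K) (B : ℕ) : KDe B K₁ K ≤ KDe B K₂ K := by
  have htake₁ := take_lcpLen K₁ K
  have htake₂ : K₂.take (lcpLen K₁ K) = K.take (lcpLen K₁ K) := hlcp ▸ take_lcpLen K₂ K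
  have d₂₁ := decimal_take_drop_le_of_le h₂₁ (htake₂.trans htake₁.symm) hlen₂₁ B
  have d₁ := decimal_take_drop_le_of_le h₁ htake₁ hlen₁ B
  rw [KDe, KDe, hlcp, Nat.dist_eq_sub_of_le d₁, Nat.dist_eq_sub_of_le (d₂₁.trans d₁)]
  omega

theorem stmt_7_general (m B : ℕ) (K2 K1 K : List Bool)
    (h2 : K2.length = m) (h1 : K1.length = m) (h : K.length = m)
    (h21 : K2 ≤ K1) (h1K : K1 ≤ K) :
    distE B K1 K ≤ distE B K2 K := by
  obtain hlt | heq := (lcpLen_le_lcpLen_of_le_of_le h21 h1K).lt_or_eq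
  · refine (distE_lt_distE_of_KL_lt ?_).le
    have := lcpLen_le_length K1 K
    simp only [KL]
    omega
  · have hKL : KL K1 K = KL K2 K := by simp only [KL, h1, h2, heq]
    have hKDe := KDe_le_KDe_of_le_of_le h21 h1K (h2.trans h1.symm) (h1.trans h.symm) heq B
    rw [distE, distE, hKL]
    gcongr

theorem stmt_7 (m B : ℕ) (hB : 1 ≤ B) (K2 K1 K : List Bool)
    (h2 : K2.length = m) (h1 : K1.length = m) (h : K.length = m)
    (h21 : K2 ≤ K1) (h1K : K1 ≤ K) :
    distE B K1 K ≤ distE B K2 K :=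
  stmt_7_general m B K2 K1 K h2 h1 h h21 h1K
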